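/- Let n ≥ 1 and let ρ_0, ρ_1, ..., ρ_{n−1} : ℝ → ℝ be measurable weight functions such that z ↦ z^i ρ_j(z) is Lebesgue integrable on ℝ for all 0 ≤ i, j ≤ n−1. Then det(μ_{ij})_{0≤i,j≤n−1} = (1/n!) ∫_{ℝ^n} Δ_n(z) Δ_n^{(ρ)}(z) dz_1 ⋯ dz_n, where μ_{ij} = ∫_ℝ z^i ρ_j(z) dz, Δ_n(z) = det(z_k^{ℓ−1})_{1≤ℓ,k≤n} is the Vandermonde determinant ∏_{1≤j<k≤n}(z_k − z_j), and Δ_n^{(ρ)}(z) = det(ρ_{ℓ−1}(z_k))_{1≤ℓ,k≤n}. -/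

import Mathlib

open MeasureTheory Finset Equiv

/-!
Expanding both determinants turns the integrand into a signed double sum over permutations
`σ, τ` of products `∏ₖ f_{σ k}(z_k) g_{τ k}(z_k)` of functions of one variable each, so Fubini
integrates every term to `∏ₖ μ_{σ k, τ k}`. For fixed `τ` the sum over `σ` is the determinant of
the moment matrix with columns permuted by `τ`, i.e. `sign τ · det μ`; the signs cancel and the
`n!` choices of `τ` give `n! · det μ`.
-/

namespace Matrix

variable {ι R : Type*} [Fintype ι] [DecidableEq ι] [CommRing R]

theorem det_mul_det_eq_sum_sum_perm (A B : Matrix ι ι R) :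
    A.det * B.det = ∑ σ : Perm ι, ∑ τ : Perm ι,
      ((Perm.sign σ : ℤ) : R) * ((Perm.sign τ : ℤ) : R) * ∏ k, A (σ k) k * B (τ k) k := by
  rw [det_apply', det_apply', sum_mul_sum]
  refine sum_congr rfl fun σ _ => sum_congr rfl fun τ _ => ?_
  rw [mul_mul_mul_comm, ← prod_mul_distrib]

theorem sum_sum_perm_sign_mul_prod (M : Matrix ι ι R) :
    ∑ σ : Perm ι, ∑ τ : Perm ι,
      ((Perm.sign σ : ℤ) : R) * ((Perm.sign τ : ℤ) : R) * ∏ k, M (σ k) (τ k)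
      = (Fintype.card ι).factorial * M.det := by
  have h_column_perm (τ : Perm ι) :
      ∑ σ : Perm ι, ((Perm.sign σ : ℤ) : R) * ((Perm.sign τ : ℤ) : R) * ∏ k, M (σ k) (τ k)
        = M.det := by
    calc _ = ((Perm.sign τ : ℤ) : R) * (M.submatrix id τ).det := by
          rw [det_apply', mul_sum]
          exact sum_congr rfl fun σ _ => by simp only [submatrix_apply, id]; ring
      _ = M.det := by
          rw [det_permute', ← mul_assoc, ← Int.cast_mul, ← Units.val_mul, Int.units_mul_self,
            Units.val_one, Int.cast_one, one_mul]
  rw [sum_comm, sum_congr rfl fun τ _ => h_column_perm τ, sum_const, card_univ,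
    Fintype.card_perm, nsmul_eq_mul]

end Matrix

open Matrix in
/-- **Andréief's identity**. -/
theorem integral_det_mul_det_eq_factorial_mul_det {ι α 𝕜 : Type*} [Fintype ι] [DecidableEq ι]
    [RCLike 𝕜] [MeasurableSpace α] {μ : Measure α} [SigmaFinite μ] (f g : ι → α → 𝕜)
    (hfg : ∀ i j, Integrable (fun x => f i x * g j x) μ) :
    ∫ x : ι → α, (of fun i k => f i (x k)).det * (of fun j k => g j (x k)).det
        ∂(Measure.pi fun _ => μ)
      = (Fintype.card ι).factorial * (of fun i j => ∫ x, f i x * g j x ∂μ).det := by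
  have h_term_integrable (σ τ : Perm ι) :
      Integrable (fun x : ι → α => ∏ k, f (σ k) (x k) * g (τ k) (x k))
        (Measure.pi fun _ => μ) :=
    Integrable.fintype_prod (f := fun k y => f (σ k) y * g (τ k) y) fun k => hfg _ _
  simp_rw [det_mul_det_eq_sum_sum_perm, of_apply]
  rw [← sum_sum_perm_sign_mul_prod, integral_finsetSum _ fun σ _ =>
    integrable_finsetSum _ fun τ _ => (h_term_integrable σ τ).const_mul _]
  refine sum_congr rfl fun σ _ => ?_
  rw [integral_finsetSum _ fun τ _ => (h_term_integrable σ τ).const_mul _]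
  refine sum_congr rfl fun τ _ => ?_
  rw [integral_const_mul, integral_fintype_prod_eq_prod (fun k y => f (σ k) y * g (τ k) y)]
  rfl

theorem det_moment_eq_integral_vandermonde
    (n : ℕ) (ρ : Fin n → ℝ → ℝ)
    (hint : ∀ i j : Fin n, Integrable (fun z : ℝ => z ^ (i : ℕ) * ρ j z)) :
    Matrix.det (Matrix.of fun i j : Fin n => ∫ z : ℝ, z ^ (i : ℕ) * ρ j z)
      = (1 / n.factorial : ℝ) *
          ∫ z : Fin n → ℝ,
            Matrix.det (Matrix.of fun ℓ k : Fin n => z k ^ (ℓ : ℕ)) *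
              Matrix.det (Matrix.of fun ℓ k : Fin n => ρ ℓ (z k)) := by
  rw [volume_pi, integral_det_mul_det_eq_factorial_mul_det (fun (ℓ : Fin n) z => z ^ (ℓ : ℕ)) ρ hint,
    Fintype.card_fin, ← mul_assoc, one_div, inv_mul_cancel₀ (by positivity), one_mul]
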